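/- arXiv:0810.3905 — 7 statements merged into one kernel-verified Lean document; each statement's English description precedes it below -/
import Mathlib

section
/- Let X be a real reflexive Banach space, F: X → X* single-valued and monotone, A: X ⇉ X* monotone, and suppose T_A = (A+F)^{-1}F is single-valued on a set C ⊆ X. Then T_A is F-firmly nonexpansive on C: for all x, y ∈ C, ⟨T_A x − T_A y, F(T_A x) − F(T_A y)⟩ ≤ ⟨T_A x − T_A y, Fx − Fy⟩. -/
open NormedSpace

theorem stmt_3_general {X : Type*} [NormedAddCommGroup X] [NormedSpace ℝ X]
    (A : X → Set (StrongDual ℝ X)) (F : X → StrongDual ℝ X)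
    (hA : ∀ x y (x' y' : StrongDual ℝ X), x' ∈ A x → y' ∈ A y → 0 ≤ (x' - y') (x - y))
    (C : Set X) (T : X → X)
    (hT : ∀ x ∈ C, F x - F (T x) ∈ A (T x)) :
    ∀ x ∈ C, ∀ y ∈ C,
      (F (T x) - F (T y)) (T x - T y) ≤ (F x - F y) (T x - T y) := by
  intro x hx y hy
  have hmono := hA (T x) (T y) _ _ (hT x hx) (hT y hy)
  simp only [sub_apply] at hmono ⊢
  linarith

/-- If `A` and `F` are monotone and the `F`-resolvent `T_A = (A+F)⁻¹F` is single-valued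
on `C` (here `T` is the selection, characterized by `F x − F(T x) ∈ A (T x)`), then `T_A`
is `F`-firmly nonexpansive on `C`. -/
theorem stmt_3 {X : Type*} [NormedAddCommGroup X] [NormedSpace ℝ X] [CompleteSpace X]
    (hrefl : Function.Surjective (inclusionInDoubleDual ℝ X))
    (A : X → Set (StrongDual ℝ X)) (F : X → StrongDual ℝ X)
    (hA : ∀ x y (x' y' : StrongDual ℝ X), x' ∈ A x → y' ∈ A y → 0 ≤ (x' - y') (x - y))
    (hF : ∀ a b : X, 0 ≤ (F a - F b) (a - b))
    (C : Set X) (T : X → X)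
    (hT : ∀ x ∈ C, F x - F (T x) ∈ A (T x)) :
    ∀ x ∈ C, ∀ y ∈ C,
      (F (T x) - F (T y)) (T x - T y) ≤ (F x - F y) (T x - T y) :=
  stmt_3_general A F hA C T hT
end

section
/- Let X be a finite-dimensional real inner product space, F: X → X a linear isomorphism such that there exists λ > 0 with ⟨z, Fz⟩ ≥ λ‖z‖² for all z, and let A: X ⇉ X be monotone with F-resolvent T_A = (A+F)^{-1}F single-valued on C. Then T_A is Lipschitz continuous on C with constant ‖F‖/λ: ‖T_A x − T_A y‖ ≤ (‖F‖/λ)‖x − y‖ for all x,y ∈ C. -/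
open RealInnerProductSpace

/-!
Monotonicity of `A` makes the `F`-resolvent `F`-firmly nonexpansive:
`⟪Tx - Ty, F (Tx - Ty)⟫ ≤ ⟪Tx - Ty, F (x - y)⟫`. Bounding the left side below by coercivity and
the right side above by Cauchy–Schwarz gives `λ‖Tx - Ty‖² ≤ ‖F‖ ‖Tx - Ty‖ ‖x - y‖`.
-/

section
variable {X : Type*} [NormedAddCommGroup X] [InnerProductSpace ℝ X]

theorem inner_map_sub_le_of_monotone_of_mem {𝓕 : Type*} [FunLike 𝓕 X X]
    [AddMonoidHomClass 𝓕 X X] (F : 𝓕) (A : X → Set X)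
    (hA : ∀ x y x' y', x' ∈ A x → y' ∈ A y → 0 ≤ ⟪x - y, x' - y'⟫) {x y u v : X}
    (hu : F x - F u ∈ A u) (hv : F y - F v ∈ A v) :
    ⟪u - v, F (u - v)⟫ ≤ ⟪u - v, F (x - y)⟫ := by
  have hdiff : ⟪u - v, F (x - y)⟫ - ⟪u - v, F (u - v)⟫ = ⟪u - v, (F x - F u) - (F y - F v)⟫ := by
    rw [← inner_sub_right, map_sub, map_sub]
    congr 1
    abel
  linarith [hA u v _ _ hu hv]

theorem norm_le_opNorm_div_mul_of_mul_sq_le_inner {E : Type*} [NormedAddCommGroup E]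
    [NormedSpace ℝ E] (G : E →L[ℝ] X) {lam : ℝ} (hlam : 0 < lam) {d : X} {e : E}
    (h : lam * ‖d‖ ^ 2 ≤ ⟪d, G e⟫) : ‖d‖ ≤ ‖G‖ / lam * ‖e‖ := by
  have hcs : lam * ‖d‖ ^ 2 ≤ ‖d‖ * (‖G‖ * ‖e‖) :=
    h.trans <| (real_inner_le_norm _ _).trans <| by gcongr; exact G.le_opNorm e
  rw [div_mul_eq_mul_div, le_div_iff₀ hlam]
  rcases (norm_nonneg d).eq_or_lt with hd | hd
  · rw [← hd, zero_mul]
    positivity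
  · nlinarith

end

theorem stmt_8_general {X : Type*} [NormedAddCommGroup X] [InnerProductSpace ℝ X]
    (F : X →L[ℝ] X)
    (lam : ℝ) (hlam : 0 < lam) (hcoerc : ∀ z : X, lam * ‖z‖ ^ 2 ≤ ⟪z, F z⟫)
    (A : X → Set X)
    (hA : ∀ x y x' y', x' ∈ A x → y' ∈ A y → 0 ≤ ⟪x - y, x' - y'⟫)
    (C : Set X) (T : X → X)
    (hT : ∀ x ∈ C, F x - F (T x) ∈ A (T x)) :
    ∀ x ∈ C, ∀ y ∈ C, ‖T x - T y‖ ≤ (‖F‖ / lam) * ‖x - y‖ := by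
  intro x hx y hy
  refine norm_le_opNorm_div_mul_of_mul_sq_le_inner F hlam ?_
  calc lam * ‖T x - T y‖ ^ 2 ≤ ⟪T x - T y, F (T x - T y)⟫ := hcoerc _
    _ ≤ ⟪T x - T y, F (x - y)⟫ :=
      inner_map_sub_le_of_monotone_of_mem F A hA (hT x hx) (hT y hy)

/-- If `F` is a linear isomorphism of a finite-dimensional real inner product space with
`⟪z, F z⟫ ≥ λ‖z‖²` and `A` is monotone with single-valued `F`-resolvent `T_A` on `C`, then
`T_A` is `‖F‖/λ`-Lipschitz on `C`. -/
theorem stmt_8 {X : Type*} [NormedAddCommGroup X] [InnerProductSpace ℝ X]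
    [FiniteDimensional ℝ X]
    (F : X →L[ℝ] X) (hFbij : Function.Bijective F)
    (lam : ℝ) (hlam : 0 < lam) (hcoerc : ∀ z : X, lam * ‖z‖ ^ 2 ≤ ⟪z, F z⟫)
    (A : X → Set X)
    (hA : ∀ x y x' y', x' ∈ A x → y' ∈ A y → 0 ≤ ⟪x - y, x' - y'⟫)
    (C : Set X) (T : X → X)
    (hT : ∀ x ∈ C, F x - F (T x) ∈ A (T x)) :
    ∀ x ∈ C, ∀ y ∈ C, ‖T x - T y‖ ≤ (‖F‖ / lam) * ‖x - y‖ :=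
  stmt_8_general F lam hlam hcoerc A hA C T hT
end

section
/- Let X be a real reflexive Banach space and F: X → X* a bijection. Let A: X ⇉ X* be such that T_A = (A+F)^{-1}F and T_{A^{-1}} = (A^{-1}+F^{-1})^{-1}F^{-1} are single-valued where defined. For x* ∈ dom T_{A^{-1}} and y* ∈ X*, the following are equivalent: (i) y* = T_{A^{-1}} x*; (ii) y* = F( F^{-1}x* − T_A( F^{-1}( y* + F(F^{-1}x* − F^{-1}y*) ) ) ). -/
open NormedSpace

/-! Both sides say that `y* ∈ A (F⁻¹x* − F⁻¹y*)`: for (i) this is the defining property of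
`T_{A⁻¹}`, and for (ii) it is the defining property `T_A w = u ↔ F w − F u ∈ A u` applied at
`u = F⁻¹x* − F⁻¹y*`, `F w = y* + F u`. -/

theorem resolvent_apply_add_eq_iff {X D : Type*} [AddGroup D] (A : X → Set D) (F : X → D)
    (Finv : D → X) (hF : Function.RightInverse Finv F) (TA : X → X)
    (hTA : ∀ w u, TA w = u ↔ F w - F u ∈ A u) (s : D) (u : X) :
    TA (Finv (s + F u)) = u ↔ s ∈ A u := by
  rw [hTA, hF, add_sub_cancel_right]

theorem eq_apply_sub_iff {X D : Type*} [AddCommGroup X] (F : X → D) (Finv : D → X)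
    (hF1 : Function.LeftInverse Finv F) (hF2 : Function.RightInverse Finv F) (y : D) (w t : X) :
    y = F (w - t) ↔ t = w - Finv y := by
  constructor
  · rintro rfl
    rw [hF1, sub_sub_cancel]
  · rintro rfl
    rw [sub_sub_cancel, hF2]

theorem stmt_9_general {X : Type*} [NormedAddCommGroup X] [NormedSpace ℝ X]
    (A : X → Set (StrongDual ℝ X))
    (F : X → StrongDual ℝ X) (Finv : StrongDual ℝ X → X)
    (hF1 : ∀ x, Finv (F x) = x) (hF2 : ∀ s, F (Finv s) = s)
    (TA : X → X) (hTA : ∀ w u, TA w = u ↔ F w - F u ∈ A u)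
    (TAi : StrongDual ℝ X → StrongDual ℝ X)
    (hTAi : ∀ ws us, TAi ws = us ↔ us ∈ A (Finv ws - Finv us))
    (xs : StrongDual ℝ X)
    (ys : StrongDual ℝ X) :
    ys = TAi xs ↔
      ys = F (Finv xs - TA (Finv (ys + F (Finv xs - Finv ys)))) :=
  calc ys = TAi xs ↔ ys ∈ A (Finv xs - Finv ys) := eq_comm.trans (hTAi xs ys)
    _ ↔ TA (Finv (ys + F (Finv xs - Finv ys))) = Finv xs - Finv ys :=
      (resolvent_apply_add_eq_iff A F Finv hF2 TA hTA ys _).symm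
    _ ↔ ys = F (Finv xs - TA (Finv (ys + F (Finv xs - Finv ys)))) :=
      (eq_apply_sub_iff F Finv hF1 hF2 ys _ _).symm

/-- Inverse-resolvent fixed point equation: for `x* ∈ dom T_{A⁻¹}` and `y* ∈ X*`,
`y* = T_{A⁻¹} x*` iff `y* = F(F⁻¹x* − T_A(F⁻¹(y* + F(F⁻¹x* − F⁻¹y*))))`. -/
theorem stmt_9 {X : Type*} [NormedAddCommGroup X] [NormedSpace ℝ X] [CompleteSpace X]
    (hrefl : Function.Surjective (inclusionInDoubleDual ℝ X))
    (A : X → Set (StrongDual ℝ X))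
    (F : X → StrongDual ℝ X) (Finv : StrongDual ℝ X → X)
    (hF1 : ∀ x, Finv (F x) = x) (hF2 : ∀ s, F (Finv s) = s)
    (TA : X → X) (hTA : ∀ w u, TA w = u ↔ F w - F u ∈ A u)
    (TAi : StrongDual ℝ X → StrongDual ℝ X)
    (hTAi : ∀ ws us, TAi ws = us ↔ us ∈ A (Finv ws - Finv us))
    (xs : StrongDual ℝ X)
    (hdom : ∃ us : StrongDual ℝ X, ∃ v : X, us ∈ A v ∧ Finv xs = v + Finv us)
    (ys : StrongDual ℝ X) :
    ys = TAi xs ↔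
      ys = F (Finv xs - TA (Finv (ys + F (Finv xs - Finv ys)))) :=
  stmt_9_general A F Finv hF1 hF2 TA hTA TAi hTAi xs ys
end

section
/- Let X be a real Hilbert space and F: X → X a linear bijection. Let A: X ⇉ X be a monotone operator whose F-resolvent T_A = (A+F)^{-1}F is single-valued with full domain, and similarly for T_{A^{-1}} = (A^{-1}+F^{-1})^{-1}F^{-1}. Then T_{A^{-1}} = Id − F ∘ T_A ∘ F^{-1}. -/
theorem stmt_10_general {X : Type*} [NormedAddCommGroup X] [InnerProductSpace ℝ X]
    (F : X ≃L[ℝ] X)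
    (A : X → Set X)
    (TA : X → X) (hTA : ∀ w u, TA w = u ↔ F w - F u ∈ A u)
    (TAi : X → X)
    (hTAi : ∀ w u, TAi w = u ↔ u ∈ A (F.symm w - F.symm u)) :
    ∀ x : X, TAi x = x - F (TA (F.symm x)) := by
  intro x
  set t := TA (F.symm x)
  have ht : x - F t ∈ A t := by simpa using (hTA (F.symm x) t).mp rfl
  have hsymm : F.symm x - F.symm (x - F t) = t := by simp
  rw [hTAi, hsymm]
  exact ht

/-- In Hilbert space, for a linear bijection `F` and monotone `A` with single-valued
full-domain resolvents, `T_{A⁻¹} = Id − F ∘ T_A ∘ F⁻¹`. -/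
theorem stmt_10 {X : Type*} [NormedAddCommGroup X] [InnerProductSpace ℝ X] [CompleteSpace X]
    (F : X ≃L[ℝ] X)
    (A : X → Set X)
    (hA : ∀ x y x' y', x' ∈ A x → y' ∈ A y →
      (0:ℝ) ≤ inner ℝ (x - y) (x' - y'))
    (TA : X → X) (hTA : ∀ w u, TA w = u ↔ F w - F u ∈ A u)
    (TAi : X → X)
    (hTAi : ∀ w u, TAi w = u ↔ u ∈ A (F.symm w - F.symm u)) :
    ∀ x : X, TAi x = x - F (TA (F.symm x)) :=
  stmt_10_general F A TA hTA TAi hTAi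
end

section
/- Let X = ℝ², θ ∈ [0, π/2), F counter-clockwise rotation by θ, C = ℝ × {0}, and N_C the normal cone operator of C. Then the F-resolvent P_C = (N_C + F)^{-1}F is the linear map given by the matrix with rows (1, −tan θ) and (0, 0); i.e., P_C(x₁,x₂) = (x₁ − x₂ tan θ, 0). -/
open Real

/-- For `C = ℝ × {0} ⊆ ℝ²` and the rotation `F` by `θ ∈ [0, π/2)`, the `F`-resolvent of the
normal cone operator `N_C` is `(x₁, x₂) ↦ (x₁ − x₂ tan θ, 0)`: `y = P_C x` iff `y ∈ C` and
`F x − F y ∈ N_C y = {0} × ℝ`. -/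
theorem stmt_13 (θ : ℝ) (hθ0 : 0 ≤ θ) (hθ1 : θ < π / 2)
    (F : ℝ × ℝ → ℝ × ℝ)
    (hF : ∀ v, F v = (cos θ * v.1 - sin θ * v.2, sin θ * v.1 + cos θ * v.2)) :
    ∀ x y : ℝ × ℝ,
      (y.2 = 0 ∧ (F x - F y).1 = 0) ↔ y = (x.1 - x.2 * tan θ, 0) := by
  have hc : 0 < cos θ := cos_pos_of_mem_Ioo ⟨by linarith [pi_pos], hθ1⟩
  intro x y
  rw [hF, hF, Prod.ext_iff, Real.tan_eq_sin_div_cos]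
  constructor
  · rintro ⟨h2, h1⟩
    simp only [Prod.fst_sub, h2, mul_zero, sub_zero] at h1
    refine ⟨?_, h2⟩
    field_simp
    nlinarith [h1]
  · rintro ⟨h1, h2⟩
    refine ⟨h2, ?_⟩
    simp only [Prod.fst_sub, h1, h2, mul_zero, sub_zero]
    field_simp
    ring
end

section
/- Let X = ℝ², θ ∈ [0, π/2), F counter-clockwise rotation by θ, and C = {x ∈ ℝ² : ‖x‖ ≤ 1} the closed unit ball. For x with ‖x‖ > 1, set α = √(‖x‖² − sin²θ) − cos θ. Then α > 0 and y := (1/‖x‖²)(x + α Fx) satisfies ‖y‖ = 1 and Fx = α y + Fy; in particular y is the F-resolvent of N_C applied to x. -/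
open Real
open scoped RealInnerProductSpace

/-! Since `F² = 2 cos θ F − I` (Cayley–Hamilton for the rotation), the ansatz
`y = ‖x‖⁻² (x + α F x)` gives `α y + F y = ‖x‖⁻² (α² + 2α cos θ + 1) F x`; since `F` is an isometry
with `⟪x, F x⟫ = cos θ ‖x‖²`, also `‖y‖² = ‖x‖⁻² (α² + 2α cos θ + 1)`. Both claims thus reduce to
`α² + 2α cos θ + 1 = ‖x‖²`, whose larger root is `α`; it is positive because
`‖x‖² − sin² θ > cos² θ`. -/

section RootOfQuadratic

variable {r θ α : ℝ}

lemma cos_lt_sqrt_sq_sub_sin_sq (hr : 1 < r) : cos θ < √(r ^ 2 - sin θ ^ 2) :=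
  lt_sqrt_of_sq_lt (by nlinarith [sin_sq_add_cos_sq θ])

lemma sq_add_two_mul_cos_mul_add_one_of_eq_sqrt_sub_cos (hr : sin θ ^ 2 ≤ r ^ 2)
    (hα : α = √(r ^ 2 - sin θ ^ 2) - cos θ) : α ^ 2 + 2 * cos θ * α + 1 = r ^ 2 := by
  subst hα
  linear_combination sq_sqrt (sub_nonneg.2 hr) - sin_sq_add_cos_sq θ

end RootOfQuadratic

section Resolvent

variable {E : Type*} [NormedAddCommGroup E] [InnerProductSpace ℝ E] {F : E → E} {c α : ℝ} {x : E}

noncomputable def ballResolvent (F : E → E) (α : ℝ) (x : E) : E := (‖x‖ ^ 2)⁻¹ • (x + α • F x)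

lemma norm_add_smul_apply_sq (hinner : ⟪x, F x⟫ = c * ‖x‖ ^ 2) (hnorm : ‖F x‖ = ‖x‖) (α : ℝ) :
    ‖x + α • F x‖ ^ 2 = (α ^ 2 + 2 * c * α + 1) * ‖x‖ ^ 2 := by
  rw [norm_add_sq_real, inner_smul_right, norm_smul, hinner, hnorm, mul_pow, norm_eq_abs, sq_abs]
  ring

lemma norm_ballResolvent (hx : x ≠ 0) (hinner : ⟪x, F x⟫ = c * ‖x‖ ^ 2)
    (hnorm : ‖F x‖ = ‖x‖) (hα : α ^ 2 + 2 * c * α + 1 = ‖x‖ ^ 2) :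
    ‖ballResolvent F α x‖ = 1 := by
  have hx2 : ‖x‖ ^ 2 ≠ 0 := by positivity
  refine (pow_left_inj₀ (norm_nonneg _) zero_le_one two_ne_zero).1 ?_
  rw [ballResolvent, norm_smul, mul_pow, norm_add_smul_apply_sq hinner hnorm, hα, norm_inv,
    norm_pow, norm_norm]
  field_simp

lemma apply_eq_smul_ballResolvent_add_apply (hlin : IsLinearMap ℝ F) (hx : x ≠ 0)
    (hF2 : F (F x) = (2 * c) • F x - x) (hα : α ^ 2 + 2 * c * α + 1 = ‖x‖ ^ 2) :
    F x = α • ballResolvent F α x + F (ballResolvent F α x) := by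
  have hx2 : ‖x‖ ^ 2 ≠ 0 := by positivity
  have hcombine : α • (x + α • F x) + (F x + α • ((2 * c) • F x - x)) = ‖x‖ ^ 2 • F x := by
    rw [← hα]; module
  rw [ballResolvent, hlin.map_smul, hlin.map_add, hlin.map_smul, hF2, smul_comm α, ← smul_add,
    hcombine, smul_smul, inv_mul_cancel₀ hx2, one_smul]

end Resolvent

section PlaneRotation

variable {θ : ℝ} {F : EuclideanSpace ℝ (Fin 2) → EuclideanSpace ℝ (Fin 2)}

lemma isLinearMap_of_rotation
    (hF : ∀ v, F v = ![cos θ * v 0 - sin θ * v 1, sin θ * v 0 + cos θ * v 1]) :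
    IsLinearMap ℝ F := by
  constructor <;> intros <;> ext i <;> fin_cases i <;>
    simp only [Fin.zero_eta, Fin.mk_one, hF, Matrix.cons_val_zero, Matrix.cons_val_one,
      Matrix.cons_val_fin_one, PiLp.add_apply, PiLp.smul_apply, smul_eq_mul] <;> ring

lemma inner_self_rotation
    (hF : ∀ v, F v = ![cos θ * v 0 - sin θ * v 1, sin θ * v 0 + cos θ * v 1])
    (v : EuclideanSpace ℝ (Fin 2)) : ⟪v, F v⟫ = cos θ * ‖v‖ ^ 2 := by
  simp only [PiLp.inner_apply, EuclideanSpace.norm_sq_eq, hF, RCLike.inner_apply, ringHom_apply,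
    Fin.sum_univ_two, Matrix.cons_val_zero, Matrix.cons_val_one, Matrix.cons_val_fin_one,
    norm_eq_abs, sq_abs]
  ring

lemma norm_rotation
    (hF : ∀ v, F v = ![cos θ * v 0 - sin θ * v 1, sin θ * v 0 + cos θ * v 1])
    (v : EuclideanSpace ℝ (Fin 2)) : ‖F v‖ = ‖v‖ := by
  rw [← sq_eq_sq₀ (norm_nonneg _) (norm_nonneg _)]
  simp only [EuclideanSpace.norm_sq_eq, hF, Fin.sum_univ_two, Matrix.cons_val_zero,
    Matrix.cons_val_one, Matrix.cons_val_fin_one, norm_eq_abs, sq_abs]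
  linear_combination (v 0 ^ 2 + v 1 ^ 2) * sin_sq_add_cos_sq θ

lemma rotation_rotation
    (hF : ∀ v, F v = ![cos θ * v 0 - sin θ * v 1, sin θ * v 0 + cos θ * v 1])
    (v : EuclideanSpace ℝ (Fin 2)) : F (F v) = (2 * cos θ) • F v - v := by
  ext i
  fin_cases i <;>
    simp only [Fin.zero_eta, Fin.mk_one, hF, Matrix.cons_val_zero, Matrix.cons_val_one,
      Matrix.cons_val_fin_one, PiLp.sub_apply, PiLp.smul_apply, smul_eq_mul]
  · linear_combination (-v 0) * sin_sq_add_cos_sq θ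
  · linear_combination (-v 1) * sin_sq_add_cos_sq θ

end PlaneRotation

theorem stmt_14_general (θ : ℝ)
    (F : EuclideanSpace ℝ (Fin 2) → EuclideanSpace ℝ (Fin 2))
    (hF : ∀ v, F v = ![cos θ * v 0 - sin θ * v 1, sin θ * v 0 + cos θ * v 1])
    (x : EuclideanSpace ℝ (Fin 2)) (hx : 1 < ‖x‖)
    (α : ℝ) (hα : α = Real.sqrt (‖x‖ ^ 2 - sin θ ^ 2) - cos θ)
    (y : EuclideanSpace ℝ (Fin 2)) (hy : y = (‖x‖ ^ 2)⁻¹ • (x + α • F x)) :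
    0 < α ∧ ‖y‖ = 1 ∧ F x = α • y + F y := by
  have hx0 : x ≠ 0 := norm_pos_iff.1 (one_pos.trans hx)
  have hroot : α ^ 2 + 2 * cos θ * α + 1 = ‖x‖ ^ 2 :=
    sq_add_two_mul_cos_mul_add_one_of_eq_sqrt_sub_cos (by nlinarith [sin_sq_le_one θ]) hα
  obtain rfl : y = ballResolvent F α x := hy
  exact ⟨hα ▸ sub_pos.2 (cos_lt_sqrt_sq_sub_sin_sq hx),
    norm_ballResolvent hx0 (inner_self_rotation hF x) (norm_rotation hF x) hroot,
    apply_eq_smul_ballResolvent_add_apply (isLinearMap_of_rotation hF) hx0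
      (rotation_rotation hF x) hroot⟩

/-- `F`-projection onto the closed unit ball of `ℝ²` (Euclidean norm), where `F` is the rotation
by `θ ∈ [0, π/2)`: for `‖x‖ > 1`, with `α = √(‖x‖² − sin²θ) − cos θ` one has `α > 0`, and
`y = ‖x‖⁻²(x + αFx)` satisfies `‖y‖ = 1` and `F x = α • y + F y`, i.e. `F x ∈ N_C y + F y`,
so `y` is the `F`-resolvent of `N_C` applied to `x`. -/
theorem stmt_14 (θ : ℝ) (hθ0 : 0 ≤ θ) (hθ1 : θ < π / 2)
    (F : EuclideanSpace ℝ (Fin 2) → EuclideanSpace ℝ (Fin 2))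
    (hF : ∀ v, F v = ![cos θ * v 0 - sin θ * v 1, sin θ * v 0 + cos θ * v 1])
    (x : EuclideanSpace ℝ (Fin 2)) (hx : 1 < ‖x‖)
    (α : ℝ) (hα : α = Real.sqrt (‖x‖ ^ 2 - sin θ ^ 2) - cos θ)
    (y : EuclideanSpace ℝ (Fin 2)) (hy : y = (‖x‖ ^ 2)⁻¹ • (x + α • F x)) :
    0 < α ∧ ‖y‖ = 1 ∧ F x = α • y + F y :=
  stmt_14_general θ F hF x hx α hα y hy
end

section
/- Let X be a real Hilbert space, p ∈ (1, ∞), and F = ∇(‖·‖^p/p), i.e., Fx = ‖x‖^{p−2} x (F0 = 0). Fix x ≠ 0 and let k ∈ (0,1) be the unique solution of k^{p−1} + k/‖x‖^{p−2} = 1. Then T_p(x) := k x satisfies Fx = T_p(x) + F(T_p(x)); i.e., kx is the F-resolvent of the identity operator applied to x. Moreover T_p(0) = 0. -/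
/-- For `F = ∇(‖·‖ᵖ/p)`, i.e. `F x = ‖x‖^{p−2} x`, on a Hilbert space, and `x ≠ 0`,
the unique `k ∈ (0,1)` with `k^{p−1} + k/‖x‖^{p−2} = 1` yields the `F`-resolvent of the
identity: `F x = kx + F(kx)`; moreover `0` is the resolvent of `Id` at `0`. -/
theorem stmt_16 {X : Type*} [NormedAddCommGroup X] [InnerProductSpace ℝ X] [CompleteSpace X]
    (p : ℝ) (hp : 1 < p)
    (F : X → X) (hF : ∀ z : X, F z = ‖z‖ ^ (p - 2) • z) (hF0 : F 0 = 0)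
    (x : X) (hx : x ≠ 0)
    (k : ℝ) (hk0 : 0 < k) (hk1 : k < 1)
    (hk : k ^ (p - 1) + k / ‖x‖ ^ (p - 2) = 1) :
    F x = k • x + F (k • x) ∧ F (0 : X) = (0 : X) + F (0 : X) := by
  have hxn : (0:ℝ) < ‖x‖ := norm_pos_iff.mpr hx
  have hxp : (0:ℝ) < ‖x‖ ^ (p - 2) := Real.rpow_pos_of_pos hxn _
  refine ⟨?_, by simp⟩
  rw [hF, hF]
  have hnorm : ‖k • x‖ = k * ‖x‖ := by
    rw [norm_smul, Real.norm_of_nonneg hk0.le]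
  rw [hnorm, Real.mul_rpow hk0.le hxn.le]
  rw [smul_smul, ← add_smul]
  congr 1
  have hk' : k ^ (p - 1) * ‖x‖ ^ (p - 2) = ‖x‖ ^ (p - 2) - k := by
    have : k ^ (p - 1) = 1 - k / ‖x‖ ^ (p - 2) := by linarith
    rw [this]; field_simp
  have hpow : k ^ (p - 2) * k = k ^ (p - 1) := by
    nth_rewrite 2 [← Real.rpow_one k]
    rw [← Real.rpow_add hk0]; ring_nf
  calc ‖x‖ ^ (p-2) = k + (‖x‖ ^ (p-2) - k) := by ring
    _ = k + k ^ (p - 2) * ‖x‖ ^ (p - 2) * k := by rw [mul_comm (k ^ (p-2)) _, mul_assoc, hpow, mul_comm, hk']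
end
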